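/- Let e be a Hermite–Biehler function. An entire function h is associated to the de Branges space B(e) if and only if there exist f, g ∈ B(e) such that h(z) = f(z) + z·g(z) for all z ∈ ℂ; in short, assoc B(e) = B(e) + z·B(e). -/

import Mathlib

open MeasureTheory Complex

noncomputable section

/-- `f#(z) := conj (f (conj z))`. -/
def fsharp (f : ℂ → ℂ) : ℂ → ℂ := fun z => (starRingEnd ℂ) (f ((starRingEnd ℂ) z))

/-- Hermite–Biehler function: entire with `|e(conj z)| < |e z|` on the upper half-plane. -/
def IsHB (e : ℂ → ℂ) : Prop :=
  Differentiable ℂ e ∧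
  ∀ z : ℂ, 0 < z.im → ‖e ((starRingEnd ℂ) z)‖ < ‖e z‖

/-- Membership in the de Branges space `B(e)`. -/
def MemDB (e f : ℂ → ℂ) : Prop :=
  Differentiable ℂ f ∧
  Integrable (fun x : ℝ => ‖f x / e x‖ ^ 2) ∧
  ∃ c : ℝ, 0 ≤ c ∧ ∀ z : ℂ, 0 < z.im →
    ‖f z / e z‖ ≤ c / Real.sqrt z.im ∧
    ‖fsharp f z / e z‖ ≤ c / Real.sqrt z.im

/-- Squared norm in `B(e)`: `∫ |f(x)|² |e(x)|⁻² dx`. -/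
def dBnormSq (e f : ℂ → ℂ) : ℝ :=
  ∫ x : ℝ, ‖f x‖ ^ 2 / ‖e x‖ ^ 2

/-- Inner product in `B(e)`: `∫ conj (f x) * g x * |e x|⁻² dx`. -/
def dBinner (e f g : ℂ → ℂ) : ℂ :=
  ∫ x : ℝ, (starRingEnd ℂ) (f x) * g x / ((‖e x‖ : ℂ)) ^ 2

/-- The reproducing kernel of `B(e)`. -/
def dBkernel (e : ℂ → ℂ) (z w : ℂ) : ℂ :=
  if z = (starRingEnd ℂ) w then
    (deriv (fsharp e) z * e z - deriv e z * fsharp e z) / (2 * Real.pi * Complex.I)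
  else
    (fsharp e z * e ((starRingEnd ℂ) w) - e z * fsharp e ((starRingEnd ℂ) w)) /
      (2 * Real.pi * Complex.I * (z - (starRingEnd ℂ) w))

/-- `s_β(z) := (i/2) (e^{iβ} e(z) − e^{−iβ} e#(z))`. -/
def sfun (e : ℂ → ℂ) (β : ℝ) (z : ℂ) : ℂ :=
  Complex.I / 2 *
    (Complex.exp (Complex.I * β) * e z - Complex.exp (-(Complex.I * β)) * fsharp e z)

end

/-- `h` is associated to `B(e)`: for every `f ∈ B(e)` and `w` with `f w ≠ 0`, the entire
function `z ↦ (f(z)h(w) − f(w)h(z))/(z − w)` (extended across the removable singularity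
at `w`) belongs to `B(e)`. -/
def AssocCond (e h : ℂ → ℂ) : Prop :=
  ∀ (f : ℂ → ℂ) (w : ℂ), MemDB e f → f w ≠ 0 →
    ∃ g : ℂ → ℂ, (∀ z : ℂ, z ≠ w → g z = (f z * h w - f w * h z) / (z - w)) ∧ MemDB e g

/-!
If `h = f + z g` with `f, g ∈ B(e)` and `F ∈ B(e)` has `F(w) ≠ 0`, the numerator
`P = F h(w) - F(w) h` vanishes at `w` and satisfies the estimates of `B(e)` up to a factor
`1 + |z|`. Away from `w` that factor is absorbed by `1 / |z - w|`; near `w` the quotient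
`P / ((z - w) e)` is bounded by compactness, because `e` has no zeros in the upper half-plane
and, when `w` is real, `e(w) ≠ 0` (otherwise every element of `B(e)` would vanish at `w`).
Conversely, `B(e)` contains a multiple `K` of the reproducing kernel at `i`, and `K(i) ≠ 0` by
the Hermite–Biehler inequality at `i`; solving the identity `(K h(i) - K(i) h) / (z - i) ∈ B(e)`
for `h` writes `h = f + z g`.
-/

open Filter Topology ComplexConjugate

lemma differentiable_fsharp {f : ℂ → ℂ} (hf : Differentiable ℂ f) :
    Differentiable ℂ (fsharp f) := fun z => by
  have := (hf (conj z)).conj_conj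
  rwa [conj_conj] at this

lemma norm_fsharp (f : ℂ → ℂ) (z : ℂ) : ‖fsharp f z‖ = ‖f (conj z)‖ :=
  Complex.norm_conj _

lemma fsharp_add (f g : ℂ → ℂ) (z : ℂ) :
    fsharp (fun z => f z + g z) z = fsharp f z + fsharp g z := by
  simp [fsharp]

lemma fsharp_const_mul (a : ℂ) (f : ℂ → ℂ) (z : ℂ) :
    fsharp (fun z => a * f z) z = conj a * fsharp f z := by
  simp [fsharp]

lemma fsharp_add_id_mul (f g : ℂ → ℂ) (z : ℂ) :
    fsharp (fun z => f z + z * g z) z = fsharp f z + z * fsharp g z := by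
  simp [fsharp]

lemma fsharp_dslope {P : ℂ → ℂ} (hP : Differentiable ℂ P) (w : ℂ) :
    fsharp (dslope P w) = dslope (fsharp P) (conj w) := by
  funext z
  rcases eq_or_ne z (conj w) with rfl | hz
  · simp only [fsharp, conj_conj, dslope_same]
    exact ((hP w).hasDerivAt.conj_conj.deriv).symm
  · have hz' : conj z ≠ w := fun h => hz (by rw [← h, conj_conj])
    simp only [fsharp, dslope_of_ne _ hz, dslope_of_ne _ hz', slope_def_field, map_div₀, map_sub,
      conj_conj]

lemma Differentiable.dslope {P : ℂ → ℂ} (hP : Differentiable ℂ P) (w : ℂ) :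
    Differentiable ℂ (dslope P w) :=
  differentiableOn_univ.1 ((Complex.differentiableOn_dslope Filter.univ_mem).2 hP.differentiableOn)

lemma norm_add_mul_div_le (a b z d : ℂ) : ‖(a + z * b) / d‖ ≤ ‖a / d‖ + ‖z‖ * ‖b / d‖ := by
  rw [add_div, mul_div_assoc, ← norm_mul]
  exact norm_add_le _ _

lemma sqrt_im_le_one_add_norm (z : ℂ) : Real.sqrt z.im ≤ 1 + ‖z‖ := by
  rcases le_or_gt z.im 1 with h | h
  · linarith [Real.sqrt_le_one.2 h, norm_nonneg z]
  · calc Real.sqrt z.im ≤ z.im := Real.sqrt_le_self_iff.2 (Or.inr h.le)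
      _ ≤ 1 + ‖z‖ := by linarith [Complex.im_le_norm z]

lemma integrable_div_one_add_abs_sq (B : ℝ) :
    Integrable (fun x : ℝ => (B / (1 + |x|)) ^ 2) := by
  have hcont : Continuous fun x : ℝ => (B / (1 + |x|)) ^ 2 :=
    (continuous_const.div (by fun_prop) fun x => by positivity).pow 2
  refine (integrable_inv_one_add_sq.const_mul (B ^ 2)).mono' hcont.aestronglyMeasurable
    (ae_of_all _ fun x => ?_)
  rw [Real.norm_eq_abs, abs_of_nonneg (sq_nonneg _), div_pow, div_eq_mul_inv]
  gcongr
  nlinarith [abs_nonneg x, sq_abs x]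

lemma measurable_div_ofReal {e q : ℂ → ℂ} (he : Continuous e) (hq : Continuous q) :
    Measurable fun x : ℝ => q x / e x :=
  (hq.comp continuous_ofReal).measurable.div (he.comp continuous_ofReal).measurable

namespace IsHB

variable {e : ℂ → ℂ}

lemma apply_ne_zero (he : IsHB e) {z : ℂ} (hz : 0 < z.im) : e z ≠ 0 :=
  norm_pos_iff.1 ((norm_nonneg _).trans_lt (he.2 z hz))

lemma norm_fsharp_le (he : IsHB e) {z : ℂ} (hz : 0 ≤ z.im) : ‖fsharp e z‖ ≤ ‖e z‖ := by
  rw [norm_fsharp]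
  rcases hz.lt_or_eq with hz | hz
  · exact (he.2 z hz).le
  · rw [conj_eq_iff_im.2 hz.symm]

lemma norm_mul_fsharp_add_mul_le (he : IsHB e) (a b : ℂ) {z : ℂ} (hz : 0 ≤ z.im) :
    ‖a * fsharp e z + b * e z‖ ≤ (‖a‖ + ‖b‖) * ‖e z‖ ∧
      ‖a * fsharp e (conj z) + b * e (conj z)‖ ≤ (‖a‖ + ‖b‖) * ‖e z‖ := by
  have hsharp := he.norm_fsharp_le hz
  have hconj : ‖e (conj z)‖ = ‖fsharp e z‖ := (norm_fsharp e z).symm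
  have hsharp_conj : ‖fsharp e (conj z)‖ = ‖e z‖ := by rw [norm_fsharp, conj_conj]
  constructor
  · calc ‖a * fsharp e z + b * e z‖ ≤ ‖a‖ * ‖fsharp e z‖ + ‖b‖ * ‖e z‖ := by
          simpa only [norm_mul] using norm_add_le (a * fsharp e z) (b * e z)
      _ ≤ (‖a‖ + ‖b‖) * ‖e z‖ := by nlinarith [norm_nonneg a]
  · calc ‖a * fsharp e (conj z) + b * e (conj z)‖
          ≤ ‖a‖ * ‖fsharp e (conj z)‖ + ‖b‖ * ‖e (conj z)‖ := by
          simpa only [norm_mul] using norm_add_le (a * fsharp e (conj z)) (b * e (conj z))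
      _ ≤ (‖a‖ + ‖b‖) * ‖e z‖ := by
          rw [hsharp_conj, hconj]; nlinarith [norm_nonneg b]

lemma eventually_ne_zero (he : IsHB e) {w : ℂ} (hw : w.im ≠ 0 ∨ e w ≠ 0) :
    ∀ᶠ z in 𝓝 w, 0 ≤ z.im → e z ≠ 0 := by
  rcases lt_or_ge w.im 0 with hlt | hle
  · filter_upwards [continuous_im.continuousAt.eventually_lt continuousAt_const hlt]
      with z hz hz'
    exact absurd hz' (not_le.2 hz)
  · have hew : e w ≠ 0 := hw.elim (fun h => he.apply_ne_zero (hle.lt_of_ne' h)) id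
    filter_upwards [he.1.continuous.continuousAt.eventually_ne hew] with z hz _ using hz

end IsHB

-- On the vertical segment above a real zero `w` of `e`, `|f| ≤ c |e| / √y = O(√y)`.
lemma MemDB.apply_eq_zero {e f : ℂ → ℂ} (he : IsHB e) (hf : MemDB e f) {w : ℂ}
    (hw : w.im = 0) (hew : e w = 0) : f w = 0 := by
  obtain ⟨hfd, -, c, hc, hb⟩ := hf
  obtain ⟨K, hK⟩ := (he.1 w).hasDerivAt.isBigO_sub.bound
  set γ : ℝ → ℂ := fun y => w + y * I
  have hγ : Tendsto γ (𝓝[>] 0) (𝓝 w) := by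
    have : Tendsto γ (𝓝 0) (𝓝 (γ 0)) := (by fun_prop : Continuous γ).tendsto 0
    simpa [γ] using this.mono_left nhdsWithin_le_nhds
  have hsqrt : Tendsto (fun y : ℝ => c * K * Real.sqrt y) (𝓝[>] 0) (𝓝 0) := by
    have : Tendsto (fun y : ℝ => c * K * Real.sqrt y) (𝓝 0) (𝓝 (c * K * Real.sqrt 0)) :=
      (by fun_prop : Continuous fun y : ℝ => c * K * Real.sqrt y).tendsto 0
    simpa using this.mono_left nhdsWithin_le_nhds
  refine tendsto_nhds_unique ((hfd.continuous.tendsto w).comp hγ) (squeeze_zero_norm' ?_ hsqrt)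
  filter_upwards [hγ.eventually hK, self_mem_nhdsWithin] with y hKy (hy : 0 < y)
  have him : (γ y).im = y := by simp [γ, hw]
  have hdist : ‖γ y - w‖ = y := by simp [γ, abs_of_pos hy]
  have hγy : 0 < (γ y).im := him.symm ▸ hy
  have hsy : 0 < Real.sqrt y := Real.sqrt_pos.2 hy
  have hquot := (hb (γ y) hγy).1
  rw [him, norm_div, div_le_div_iff₀ (norm_pos_iff.2 (he.apply_ne_zero hγy)) hsy] at hquot
  rw [hew, sub_zero, hdist] at hKy
  show ‖f (γ y)‖ ≤ c * K * Real.sqrt y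
  refine le_of_mul_le_mul_right ?_ hsy
  calc ‖f (γ y)‖ * Real.sqrt y ≤ c * ‖e (γ y)‖ := hquot
    _ ≤ c * (K * y) := mul_le_mul_of_nonneg_left hKy hc
    _ = c * K * Real.sqrt y * Real.sqrt y := by
      rw [mul_assoc _ (Real.sqrt y), Real.mul_self_sqrt hy.le]; ring

lemma MemDB.const_mul {e f : ℂ → ℂ} (hf : MemDB e f) (a : ℂ) :
    MemDB e (fun z => a * f z) := by
  obtain ⟨hfd, hfi, c, hc, hb⟩ := hf
  refine ⟨hfd.const_mul a, ?_, ‖a‖ * c, by positivity, fun z hz => ?_⟩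
  · simpa only [mul_div_assoc, norm_mul, mul_pow] using hfi.const_mul (‖a‖ ^ 2)
  · simp only [fsharp_const_mul, mul_div_assoc, norm_mul, Complex.norm_conj]
    exact ⟨mul_le_mul_of_nonneg_left (hb z hz).1 (norm_nonneg a),
      mul_le_mul_of_nonneg_left (hb z hz).2 (norm_nonneg a)⟩

lemma MemDB.add {e f g : ℂ → ℂ} (hf : MemDB e f) (hg : MemDB e g) (he : Continuous e) :
    MemDB e (fun z => f z + g z) := by
  obtain ⟨hfd, hfi, c, hc, hb⟩ := hf
  obtain ⟨hgd, hgi, c', hc', hb'⟩ := hg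
  refine ⟨hfd.add hgd, ?_, c + c', by positivity, fun z hz => ?_⟩
  · refine ((hfi.add hgi).const_mul 2).mono'
      ((measurable_div_ofReal (q := fun z => f z + g z) he (hfd.add hgd).continuous).norm.pow_const
        2).aestronglyMeasurable
      (ae_of_all _ fun x => ?_)
    rw [Real.norm_eq_abs, abs_of_nonneg (sq_nonneg _), add_div]
    exact (pow_le_pow_left₀ (norm_nonneg _) (norm_add_le _ _) 2).trans add_sq_le
  · rw [fsharp_add, add_div, add_div, add_div]
    exact ⟨(norm_add_le _ _).trans (add_le_add (hb z hz).1 (hb' z hz).1),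
      (norm_add_le _ _).trans (add_le_add (hb z hz).2 (hb' z hz).2)⟩

def MemDBLinGrowth (e P : ℂ → ℂ) : Prop :=
  Differentiable ℂ P ∧
  Integrable (fun x : ℝ => (‖P x / e x‖ / (1 + |x|)) ^ 2) ∧
  ∃ c : ℝ, 0 ≤ c ∧ ∀ z : ℂ, 0 < z.im →
    ‖P z / e z‖ ≤ c * (1 + ‖z‖) / Real.sqrt z.im ∧
    ‖fsharp P z / e z‖ ≤ c * (1 + ‖z‖) / Real.sqrt z.im

lemma memDBLinGrowth_add_id_mul {e f g : ℂ → ℂ} (he : Continuous e) (hf : MemDB e f)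
    (hg : MemDB e g) : MemDBLinGrowth e (fun z => f z + z * g z) := by
  obtain ⟨hfd, hfi, c, hc, hb⟩ := hf
  obtain ⟨hgd, hgi, c', hc', hb'⟩ := hg
  have hd : Differentiable ℂ fun z => f z + z * g z := hfd.add (differentiable_id.mul hgd)
  refine ⟨hd, ?_, c + c', by positivity, fun z hz => ?_⟩
  · have hmeas : AEStronglyMeasurable fun x : ℝ => (‖(f x + x * g x) / e x‖ / (1 + |x|)) ^ 2 :=
      (((measurable_div_ofReal he hd.continuous).norm.div (by fun_prop)).pow_const
        2).aestronglyMeasurable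
    refine ((hfi.add hgi).const_mul 2).mono' hmeas (ae_of_all _ fun x => ?_)
    have hx : (0 : ℝ) < 1 + |x| := by positivity
    have hle : ‖(f x + x * g x) / e x‖ / (1 + |x|) ≤ ‖f x / e x‖ + ‖g x / e x‖ := by
      rw [div_le_iff₀ hx]
      have := norm_add_mul_div_le (f x) (g x) x (e x)
      rw [Complex.norm_real, Real.norm_eq_abs] at this
      nlinarith [norm_nonneg (f x / e x), norm_nonneg (g x / e x), abs_nonneg x]
    rw [Real.norm_eq_abs, abs_of_nonneg (sq_nonneg _)]
    exact (pow_le_pow_left₀ (by positivity) hle 2).trans add_sq_le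
  · have hs : 0 < Real.sqrt z.im := Real.sqrt_pos.2 hz
    have key : ∀ a b : ℝ, a ≤ c / Real.sqrt z.im → b ≤ c' / Real.sqrt z.im →
        a + ‖z‖ * b ≤ (c + c') * (1 + ‖z‖) / Real.sqrt z.im := by
      intro a b ha hb
      calc a + ‖z‖ * b ≤ c / Real.sqrt z.im + ‖z‖ * (c' / Real.sqrt z.im) :=
            add_le_add ha (mul_le_mul_of_nonneg_left hb (norm_nonneg z))
        _ ≤ (c + c') * (1 + ‖z‖) / Real.sqrt z.im := by
            rw [mul_div_assoc', ← add_div]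
            gcongr
            nlinarith [norm_nonneg z]
    exact ⟨(norm_add_mul_div_le _ _ _ _).trans (key _ _ (hb z hz).1 (hb' z hz).1),
      by rw [fsharp_add_id_mul]
         exact (norm_add_mul_div_le _ _ _ _).trans (key _ _ (hb z hz).2 (hb' z hz).2)⟩

lemma memDBLinGrowth_of_norm_le_mul {e q : ℂ → ℂ} {C : ℝ} (he : Continuous e)
    (hq : Differentiable ℂ q) (hC : 0 ≤ C)
    (hbound : ∀ z : ℂ, 0 ≤ z.im → ‖q z‖ ≤ C * ‖e z‖ ∧ ‖q (conj z)‖ ≤ C * ‖e z‖) :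
    MemDBLinGrowth e q := by
  have hquot : ∀ z : ℂ, 0 ≤ z.im → ‖q z / e z‖ ≤ C ∧ ‖fsharp q z / e z‖ ≤ C := fun z hz => by
    rw [norm_div, norm_div, norm_fsharp]
    exact ⟨div_le_of_le_mul₀ (norm_nonneg _) hC (hbound z hz).1,
      div_le_of_le_mul₀ (norm_nonneg _) hC (hbound z hz).2⟩
  refine ⟨hq, ?_, C, hC, fun z hz => ?_⟩
  · have hmeas : AEStronglyMeasurable fun x : ℝ => (‖q x / e x‖ / (1 + |x|)) ^ 2 :=
      (((measurable_div_ofReal he hq.continuous).norm.div (by fun_prop)).pow_const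
        2).aestronglyMeasurable
    refine (integrable_div_one_add_abs_sq C).mono' hmeas (ae_of_all _ fun x => ?_)
    rw [Real.norm_eq_abs, abs_of_nonneg (sq_nonneg _)]
    gcongr
    exact (hquot x (by simp)).1
  · have hC' : C ≤ C * (1 + ‖z‖) / Real.sqrt z.im := by
      rw [le_div_iff₀ (Real.sqrt_pos.2 hz)]
      exact mul_le_mul_of_nonneg_left (sqrt_im_le_one_add_norm z) hC
    exact ⟨(hquot z hz.le).1.trans hC', (hquot z hz.le).2.trans hC'⟩

-- Near `w` the quotient is bounded by compactness; away from `w`, `1 + |z| ≲ |z - w|`.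
lemma exists_norm_dslope_div_mul_le {e P : ℂ → ℂ} {w : ℂ} (he : Continuous e)
    (hP : Differentiable ℂ P) (hPw : P w = 0) (hw : ∀ᶠ z in 𝓝 w, 0 ≤ z.im → e z ≠ 0) :
    ∃ B A : ℝ, 0 ≤ B ∧ 0 ≤ A ∧ ∀ z : ℂ, 0 ≤ z.im →
      ‖dslope P w z / e z‖ * (1 + ‖z‖) ≤ B + A * ‖P z / e z‖ := by
  obtain ⟨ρ, hρ, hball⟩ := Metric.nhds_basis_closedBall.eventually_iff.1 hw
  set S := Metric.closedBall w ρ ∩ {z : ℂ | 0 ≤ z.im}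
  have hS : IsCompact S :=
    (isCompact_closedBall w ρ).inter_right (isClosed_le continuous_const continuous_im)
  obtain ⟨M₀, hM₀⟩ := hS.exists_bound_of_continuousOn
    ((hP.dslope w).continuous.continuousOn.div he.continuousOn fun z hz => hball hz.1 hz.2)
  set M := max M₀ 0
  have hM : ∀ z ∈ S, ‖dslope P w z / e z‖ ≤ M := fun z hz => (hM₀ z hz).trans (le_max_left _ _)
  have hM0 : 0 ≤ M := le_max_right _ _
  refine ⟨M * (1 + ‖w‖ + ρ), (1 + ‖w‖) / ρ + 1, by positivity, by positivity, fun z hz => ?_⟩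
  have hnorm : ‖z‖ ≤ ‖w‖ + dist z w := norm_le_of_mem_closedBall (Metric.mem_closedBall.2 le_rfl)
  rcases le_or_gt (dist z w) ρ with hnear | hfar
  · calc ‖dslope P w z / e z‖ * (1 + ‖z‖) ≤ M * (1 + ‖w‖ + ρ) :=
          mul_le_mul (hM z ⟨Metric.mem_closedBall.2 hnear, hz⟩) (by linarith) (by positivity) hM0
      _ ≤ M * (1 + ‖w‖ + ρ) + ((1 + ‖w‖) / ρ + 1) * ‖P z / e z‖ := by
          have : 0 ≤ ((1 + ‖w‖) / ρ + 1) * ‖P z / e z‖ := by positivity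
          linarith
  · have hd : 0 < dist z w := hρ.trans hfar
    have hzw : z ≠ w := dist_pos.1 hd
    have hslope : ‖dslope P w z / e z‖ = ‖P z / e z‖ / dist z w := by
      rw [dslope_of_ne _ hzw, slope_def_field, hPw, sub_zero, div_right_comm, norm_div,
        dist_eq_norm]
    have hgrowth : 1 + ‖z‖ ≤ ((1 + ‖w‖) / ρ + 1) * dist z w := by
      have : 1 + ‖w‖ ≤ (1 + ‖w‖) / ρ * dist z w := by
        rw [div_mul_eq_mul_div, le_div_iff₀ hρ]
        exact mul_le_mul_of_nonneg_left hfar.le (by positivity)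
      linarith
    calc ‖dslope P w z / e z‖ * (1 + ‖z‖)
        ≤ ‖P z / e z‖ / dist z w * (((1 + ‖w‖) / ρ + 1) * dist z w) := by
          rw [hslope]; gcongr
      _ = ((1 + ‖w‖) / ρ + 1) * ‖P z / e z‖ := by field_simp
      _ ≤ M * (1 + ‖w‖ + ρ) + ((1 + ‖w‖) / ρ + 1) * ‖P z / e z‖ := by
          have : 0 ≤ M * (1 + ‖w‖ + ρ) := by positivity
          linarith

lemma norm_le_div_sqrt_of_mul_le {q p : ℝ} {B A c : ℝ} {z : ℂ} (hz : 0 < z.im) (hB : 0 ≤ B)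
    (hA : 0 ≤ A) (hq : q * (1 + ‖z‖) ≤ B + A * p) (hp : p ≤ c * (1 + ‖z‖) / Real.sqrt z.im) :
    q ≤ (B + A * c) / Real.sqrt z.im := by
  have hs : 0 < Real.sqrt z.im := Real.sqrt_pos.2 hz
  have hsz := sqrt_im_le_one_add_norm z
  rw [le_div_iff₀ hs] at hp ⊢
  have h1 : q * Real.sqrt z.im * (1 + ‖z‖) ≤ (B + A * c) * (1 + ‖z‖) := by
    nlinarith [mul_le_mul_of_nonneg_right hq hs.le, mul_le_mul_of_nonneg_left hp hA,
      mul_le_mul_of_nonneg_left hsz hB]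
  exact le_of_mul_le_mul_right h1 (by positivity)

lemma MemDBLinGrowth.memDB_dslope {e P : ℂ → ℂ} (he : IsHB e) (hP : MemDBLinGrowth e P)
    {w : ℂ} (hPw : P w = 0) (hw : w.im ≠ 0 ∨ e w ≠ 0) : MemDB e (dslope P w) := by
  obtain ⟨hPd, hPi, c, hc, hPb⟩ := hP
  have hw' : (conj w).im ≠ 0 ∨ e (conj w) ≠ 0 := by
    rcases eq_or_ne w.im 0 with h | h
    · rwa [conj_eq_iff_im.2 h]
    · exact Or.inl (by simpa using h)
  obtain ⟨B, A, hB, hA, hBA⟩ :=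
    exists_norm_dslope_div_mul_le he.1.continuous hPd hPw (he.eventually_ne_zero hw)
  obtain ⟨B', A', hB', hA', hBA'⟩ := exists_norm_dslope_div_mul_le he.1.continuous
    (differentiable_fsharp hPd) (by simp [fsharp, hPw]) (he.eventually_ne_zero hw')
  refine ⟨hPd.dslope w, ?_, B + A * c + (B' + A' * c), by positivity, fun z hz => ⟨?_, ?_⟩⟩
  · refine ((integrable_div_one_add_abs_sq B).add (hPi.const_mul (A ^ 2))).const_mul 2 |>.mono'
      ((measurable_div_ofReal he.1.continuous (hPd.dslope w).continuous).norm.pow_const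
        2).aestronglyMeasurable (ae_of_all _ fun x => ?_)
    have hx : (0 : ℝ) < 1 + |x| := by positivity
    have hle : ‖dslope P w x / e x‖ ≤ B / (1 + |x|) + A * (‖P x / e x‖ / (1 + |x|)) := by
      have := hBA x (by simp)
      rw [Complex.norm_real, Real.norm_eq_abs] at this
      rw [mul_div_assoc', ← add_div, le_div_iff₀ hx]
      exact this
    rw [Real.norm_eq_abs, abs_of_nonneg (sq_nonneg _)]
    refine (pow_le_pow_left₀ (norm_nonneg _) hle 2).trans (add_sq_le.trans_eq ?_)
    simp only [Pi.add_apply]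
    ring
  · refine (norm_le_div_sqrt_of_mul_le hz hB hA (hBA z hz.le) (hPb z hz).1).trans ?_
    exact div_le_div_of_nonneg_right (by linarith [mul_nonneg hA' hc]) (Real.sqrt_nonneg _)
  · rw [fsharp_dslope hPd]
    refine (norm_le_div_sqrt_of_mul_le hz hB' hA' (hBA' z hz.le) (hPb z hz).2).trans ?_
    exact div_le_div_of_nonneg_right (by linarith [mul_nonneg hA hc]) (Real.sqrt_nonneg _)

-- `N(z) = e(-i) e#(z) - e#(-i) e(z)` vanishes at `-i`, so `N / (z + i)` (a multiple of the
-- reproducing kernel at `i`) lies in `B(e)`; its value at `i` is `(|e(-i)|² - |e(i)|²) / 2i`.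
lemma IsHB.exists_memDB_apply_I_ne_zero {e : ℂ → ℂ} (he : IsHB e) :
    ∃ K : ℂ → ℂ, MemDB e K ∧ K I ≠ 0 := by
  set N : ℂ → ℂ := fun z => e (-I) * fsharp e z + -fsharp e (-I) * e z
  have hN : MemDBLinGrowth e N :=
    memDBLinGrowth_of_norm_le_mul he.1.continuous
      (((differentiable_fsharp he.1).const_mul _).add (he.1.const_mul _)) (by positivity)
      fun z hz => he.norm_mul_fsharp_add_mul_le _ _ hz
  have hN0 : N (-I) = 0 := by
    simp only [N, fsharp, conj_neg_I]
    ring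
  have hNI : N I = (Complex.normSq (e (-I)) - Complex.normSq (e I) : ℝ) := by
    simp only [N, fsharp, Complex.conj_I, conj_neg_I]
    rw [Complex.mul_conj, neg_mul, ← Complex.normSq_eq_conj_mul_self]
    push_cast
    ring
  have hlt : Complex.normSq (e (-I)) < Complex.normSq (e I) := by
    have := he.2 I (by simp)
    rw [Complex.conj_I] at this
    rw [← Complex.sq_norm, ← Complex.sq_norm]
    exact pow_lt_pow_left₀ this (norm_nonneg _) two_ne_zero
  have hIne : I ≠ -I := fun h => by
    have := congrArg Complex.im h
    norm_num at this
  refine ⟨dslope N (-I), hN.memDB_dslope he hN0 (Or.inl (by simp)), ?_⟩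
  rw [dslope_of_ne _ hIne, slope_def_field]
  refine div_ne_zero ?_ (sub_ne_zero.2 hIne)
  rw [hN0, sub_zero, hNI]
  exact Complex.ofReal_ne_zero.2 (sub_ne_zero.2 hlt.ne)

lemma exists_memDB_add_id_mul_of_slope {e h K g : ℂ → ℂ} {w : ℂ} (he : Continuous e)
    (hK : MemDB e K) (hKw : K w ≠ 0) (hg : MemDB e g)
    (hslope : ∀ z : ℂ, z ≠ w → g z = (K z * h w - K w * h z) / (z - w)) :
    ∃ f₀ g₀ : ℂ → ℂ, MemDB e f₀ ∧ MemDB e g₀ ∧ ∀ z : ℂ, h z = f₀ z + z * g₀ z := by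
  refine ⟨fun z => (K w)⁻¹ * h w * K z + (K w)⁻¹ * w * g z, fun z => -(K w)⁻¹ * g z,
    (hK.const_mul _).add (hg.const_mul _) he, hg.const_mul _, fun z => ?_⟩
  rcases eq_or_ne z w with rfl | hz
  · field_simp
    ring
  · dsimp only
    rw [hslope z hz]
    field_simp [sub_ne_zero.2 hz]
    ring

theorem statement11_general (e h : ℂ → ℂ) (he : IsHB e) :
    AssocCond e h ↔
      ∃ f g : ℂ → ℂ, MemDB e f ∧ MemDB e g ∧ ∀ z : ℂ, h z = f z + z * g z := by
  constructor
  · intro hassoc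
    obtain ⟨K, hK, hKI⟩ := he.exists_memDB_apply_I_ne_zero
    obtain ⟨g, hslope, hg⟩ := hassoc K I hK hKI
    exact exists_memDB_add_id_mul_of_slope he.1.continuous hK hKI hg hslope
  · rintro ⟨f₀, g₀, hf₀, hg₀, hrep⟩ f w hf hfw
    have hw : w.im ≠ 0 ∨ e w ≠ 0 := by
      by_contra! h0
      exact hfw (hf.apply_eq_zero he h0.1 h0.2)
    set P : ℂ → ℂ := fun z => f z * h w - f w * h z
    have hPw : P w = 0 := by simp only [P]; ring
    have hP : MemDBLinGrowth e P := by
      have := memDBLinGrowth_add_id_mul he.1.continuous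
        ((hf.const_mul (h w)).add (hf₀.const_mul (-f w)) he.1.continuous) (hg₀.const_mul (-f w))
      convert this using 2 with z
      simp only [P, hrep]
      ring
    refine ⟨dslope P w, fun z hz => ?_, hP.memDB_dslope he hPw hw⟩
    rw [dslope_of_ne _ hz, slope_def_field, hPw, sub_zero]

/-- An entire function `h` is associated to `B(e)` iff
`h ∈ B(e) + z·B(e)`. -/
theorem statement11 (e h : ℂ → ℂ) (he : IsHB e) (hh : Differentiable ℂ h) :
    AssocCond e h ↔
      ∃ f g : ℂ → ℂ, MemDB e f ∧ MemDB e g ∧ ∀ z : ℂ, h z = f z + z * g z :=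
  statement11_general e h he
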